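/- arXiv:2008.13428 — 3 statements merged into one kernel-verified Lean document; each statement's English description precedes it below -/
import Mathlib

section
/- Let S be an even positive integer and N_B, N_C positive integers. Suppose R ∈ ℝ^{(S·N_B)×(S·N_C)} is simultaneously block-circulant, R = Σ_{k=0}^{S−1} Ω_S^k ⊗ r_k with blocks r_k ∈ ℝ^{N_B×N_C}, and centrosymmetric, R·J_{S·N_C} = J_{S·N_B}·R. Then for all integers k with 0 ≤ k ≤ S/2, the blocks satisfy r_{S/2+k}·J_{N_C} = J_{N_B}·r_{S/2−k} (indices taken modulo S). -/
/-!
The entry `((i, b), (j, c))` of `∑ₖ Ωᵏ ⊗ rₖ` is `r_{j-i} b c` (indices in `Fin S` with its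
cyclic arithmetic), and multiplying by an exchange matrix on either side reverses an index.
Since `rev a - rev b = b - a`, centrosymmetry read at the entry `((m, b), (rev 0, c))` says
`r_{-m} J = J r_m` for every `m`. For even `S` the indices `S/2 + k` and `S/2 - k` sum to `S`,
so they are negatives of each other.
-/

open Matrix Kronecker

/-- The cyclic shift permutation matrix `Ω_n` with `(Ω_n)_{i,j} = 1` iff `j ≡ i+1 (mod n)`. -/
def cyclicShift (n : ℕ) : Matrix (Fin n) (Fin n) ℝ :=
  Matrix.of fun i j => if (j : ℕ) = ((i : ℕ) + 1) % n then 1 else 0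

/-- The exchange matrix `J_n` with ones on the anti-diagonal and zeros elsewhere. -/
def exchMatrix (n : ℕ) : Matrix (Fin n) (Fin n) ℝ :=
  Matrix.of fun i j => if (i : ℕ) + (j : ℕ) = n - 1 then 1 else 0

open Fin.NatCast

lemma Fin.rev_sub_rev {n : ℕ} (a b : Fin n) : a.rev - b.rev = b - a := by
  cases n with
  | zero => exact a.elim0
  | succ n => rw [← Fin.last_sub, ← Fin.last_sub]; abel

lemma cyclicShift_apply {n : ℕ} [NeZero n] (i j : Fin n) :
    cyclicShift n i j = if j = i + 1 then 1 else 0 := by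
  simp [cyclicShift, Fin.ext_iff, Fin.val_add]

lemma cyclicShift_pow_apply {n : ℕ} [NeZero n] (k : ℕ) (i j : Fin n) :
    (cyclicShift n ^ k) i j = if j = i + k then 1 else 0 := by
  induction k generalizing j with
  | zero => simp [one_apply, eq_comm]
  | succ k ih =>
    simp only [pow_succ, mul_apply, ih, cyclicShift_apply, ite_mul, one_mul, zero_mul,
      Finset.sum_ite_eq', Finset.mem_univ, if_true, Nat.cast_succ, add_assoc]

def blockCirculant {n : ℕ} {β γ : Type*} (r : Fin n → Matrix β γ ℝ) :
    Matrix (Fin n × β) (Fin n × γ) ℝ :=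
  ∑ k : Fin n, (cyclicShift n ^ (k : ℕ)) ⊗ₖ r k

lemma blockCirculant_apply {n : ℕ} [NeZero n] {β γ : Type*} (r : Fin n → Matrix β γ ℝ)
    (i : Fin n) (b : β) (j : Fin n) (c : γ) :
    blockCirculant r (i, b) (j, c) = r (j - i) b c := by
  have hshift (k : Fin n) : j = i + k ↔ k = j - i := by rw [eq_sub_iff_add_eq, add_comm, eq_comm]
  simp [blockCirculant, Matrix.sum_apply, cyclicShift_pow_apply, Fin.cast_val_eq_self, hshift]

lemma exchMatrix_eq_submatrix (n : ℕ) :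
    exchMatrix n = (1 : Matrix (Fin n) (Fin n) ℝ).submatrix id Fin.rev := by
  ext i j
  simp only [exchMatrix, of_apply, submatrix_apply, id, one_apply, Fin.ext_iff, Fin.val_rev]
  congr 1
  exact propext (by omega)

lemma mul_exchMatrix_apply {m : Type*} {q : ℕ} (M : Matrix m (Fin q) ℝ) (x : m) (c : Fin q) :
    (M * exchMatrix q) x c = M x c.rev := by
  simp [exchMatrix_eq_submatrix, mul_apply, one_apply]

lemma exchMatrix_mul_apply {m : Type*} {p : ℕ} (M : Matrix (Fin p) m ℝ) (b : Fin p) (x : m) :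
    (exchMatrix p * M) b x = M b.rev x := by
  simp [exchMatrix_eq_submatrix, mul_apply, one_apply, @eq_comm _ b, Fin.rev_eq_iff]

lemma mul_exchMatrix_kronecker_apply {m : Type*} {p q : ℕ} (M : Matrix m (Fin p × Fin q) ℝ)
    (x : m) (j : Fin p) (c : Fin q) :
    (M * (exchMatrix p ⊗ₖ exchMatrix q)) x (j, c) = M x (j.rev, c.rev) := by
  simp [exchMatrix_eq_submatrix, mul_apply, one_apply, Fintype.sum_prod_type]

lemma exchMatrix_kronecker_mul_apply {m : Type*} {p q : ℕ} (M : Matrix (Fin p × Fin q) m ℝ)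
    (i : Fin p) (b : Fin q) (x : m) :
    ((exchMatrix p ⊗ₖ exchMatrix q) * M) (i, b) x = M (i.rev, b.rev) x := by
  simp [exchMatrix_eq_submatrix, mul_apply, one_apply, Fintype.sum_prod_type,
    @eq_comm _ i, @eq_comm _ b, Fin.rev_eq_iff]

lemma block_neg_mul_exchMatrix_of_centrosymm {n p q : ℕ} [NeZero n]
    (r : Fin n → Matrix (Fin p) (Fin q) ℝ)
    (hcs : blockCirculant r * (exchMatrix n ⊗ₖ exchMatrix q) =
      (exchMatrix n ⊗ₖ exchMatrix p) * blockCirculant r)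
    (m : Fin n) :
    r (-m) * exchMatrix q = exchMatrix p * r m := by
  ext b c
  have h := congrFun (congrFun hcs (m, b)) (Fin.rev 0, c)
  rw [mul_exchMatrix_kronecker_apply, exchMatrix_kronecker_mul_apply, blockCirculant_apply,
    blockCirculant_apply, Fin.rev_rev, zero_sub, Fin.rev_sub_rev, sub_zero] at h
  rwa [mul_exchMatrix_apply, exchMatrix_mul_apply]

theorem blocks_reflection_relation_general
    (S N_B N_C : ℕ) [NeZero S] (hSeven : Even S)
    (r : Fin S → Matrix (Fin N_B) (Fin N_C) ℝ)
    (R : Matrix (Fin S × Fin N_B) (Fin S × Fin N_C) ℝ)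
    (hR : R = ∑ k : Fin S, (cyclicShift S ^ (k : ℕ)) ⊗ₖ r k)
    (hcs : R * (exchMatrix S ⊗ₖ exchMatrix N_C) = (exchMatrix S ⊗ₖ exchMatrix N_B) * R) :
    ∀ k : ℕ, k ≤ S / 2 →
      r ((S / 2 + k : ℕ) : Fin S) * exchMatrix N_C =
        exchMatrix N_B * r ((S / 2 - k : ℕ) : Fin S) := by
  intro k hk
  subst hR
  obtain ⟨t, ht⟩ := hSeven
  have hneg : ((S / 2 + k : ℕ) : Fin S) = -((S / 2 - k : ℕ) : Fin S) := by
    rw [eq_neg_iff_add_eq_zero, ← Nat.cast_add, show S / 2 + k + (S / 2 - k) = S by omega,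
      Fin.natCast_self]
  rw [hneg]
  exact block_neg_mul_exchMatrix_of_centrosymm r hcs _

/-- If `R` is simultaneously block-circulant of order `S` (with blocks `r_k`, i.e.
`R = Σ_k Ω_S^k ⊗ r_k`) and centrosymmetric (`R·J_{S·N_C} = J_{S·N_B}·R`), then for every
`0 ≤ k ≤ S/2` the blocks satisfy `r_{S/2+k}·J_{N_C} = J_{N_B}·r_{S/2−k}` (indices mod `S`). -/
theorem blocks_reflection_relation
    (S N_B N_C : ℕ) [NeZero S] (hSeven : Even S) (hNB : 0 < N_B) (hNC : 0 < N_C)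
    (r : Fin S → Matrix (Fin N_B) (Fin N_C) ℝ)
    (R : Matrix (Fin S × Fin N_B) (Fin S × Fin N_C) ℝ)
    (hR : R = ∑ k : Fin S, (cyclicShift S ^ (k : ℕ)) ⊗ₖ r k)
    (hcs : R * (exchMatrix S ⊗ₖ exchMatrix N_C) = (exchMatrix S ⊗ₖ exchMatrix N_B) * R) :
    ∀ k : ℕ, k ≤ S / 2 →
      r ((S / 2 + k : ℕ) : Fin S) * exchMatrix N_C =
        exchMatrix N_B * r ((S / 2 - k : ℕ) : Fin S) :=
  blocks_reflection_relation_general S N_B N_C hSeven r R hR hcs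
end

section
/- Let n, l, m be even integers greater than 1 and let R ∈ ℝ^{(n·l)×(n·m)} be an arbitrary matrix. Define Z* = (1/(2n)) · Σ_{k=0}^{n−1} (Ω_n^k ⊗ I_l)ᵀ · (R + J_{n·l}·R·J_{n·m}) · (Ω_n^k ⊗ I_m). Then Z* is simultaneously block-circulant of order n with l×m blocks and centrosymmetric (Z*·J_{n·m} = J_{n·l}·Z*), and Z* minimizes the Frobenius-norm distance to R over all matrices with both properties: for every Z ∈ ℝ^{(n·l)×(n·m)} that is block-circulant of order n and centrosymmetric, ‖Z* − R‖_F ≤ ‖Z − R‖_F. -/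
open Matrix Kronecker

/-- A block matrix is block-circulant of order `n` with `p × m` blocks if
`B = Σ_{k=0}^{n−1} Ω_n^k ⊗ b_k` for some blocks `b_k`. -/
def IsBlockCirculant {n p m : ℕ} (B : Matrix (Fin n × Fin p) (Fin n × Fin m) ℝ) : Prop :=
  ∃ b : Fin n → Matrix (Fin p) (Fin m) ℝ,
    B = ∑ k : Fin n, (cyclicShift n ^ (k : ℕ)) ⊗ₖ b k

/-!
`Z*` is the average of `R` over the group of order `2n` generated by the cyclic block shifts and
the reversal of the flattened index, acting by simultaneous row and column permutations (these are
`Ω_n^k ⊗ I` and `J_n ⊗ J`). The block-circulant centrosymmetric matrices are exactly the fixed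
points of this action, so the average is one of them; and since the action preserves the Frobenius
pairing, `R - Z*` is orthogonal to every fixed point, whence `‖Z - R‖² = ‖Z - Z*‖² + ‖Z* - R‖²`.
-/

open Equiv

namespace Matrix

variable {α β 𝕜 : Type*}

section PermMatrix

variable [DecidableEq α] [DecidableEq β]

theorem permMatrix_prodCongr [MulZeroOneClass 𝕜] (σ : Perm α) (τ : Perm β) :
    Perm.permMatrix 𝕜 (σ.prodCongr τ) = σ.permMatrix 𝕜 ⊗ₖ τ.permMatrix 𝕜 := by
  ext ⟨i, a⟩ ⟨j, c⟩
  simp only [kronecker_apply, PEquiv.toMatrix_apply, toPEquiv_apply, Option.mem_def,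
    Option.some_inj, prodCongr_apply, Prod.map_apply, Prod.mk.injEq, ite_zero_mul_ite_zero,
    one_mul]

theorem permMatrix_pow [Fintype α] [Semiring 𝕜] (σ : Perm α) (k : ℕ) :
    (σ ^ k).permMatrix 𝕜 = σ.permMatrix 𝕜 ^ k := by
  induction k with
  | zero => simp
  | succ k ih => rw [pow_succ', permMatrix_mul, ih, pow_succ]

variable [Fintype α] [Fintype β]

theorem permMatrix_mul_mul [NonAssocSemiring 𝕜] (σ : Perm α) (τ : Perm β) (M : Matrix α β 𝕜) :
    σ.permMatrix 𝕜 * M * τ.permMatrix 𝕜 = M.submatrix σ τ.symm := by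
  rw [PEquiv.toMatrix_toPEquiv_mul, PEquiv.mul_toMatrix_toPEquiv, submatrix_submatrix]
  rfl

theorem mul_permMatrix_eq_permMatrix_mul_iff [Semiring 𝕜] (σ : Perm α) (τ : Perm β)
    (B : Matrix α β 𝕜) :
    B * τ.permMatrix 𝕜 = σ.permMatrix 𝕜 * B ↔ B.submatrix σ τ = B := by
  rw [PEquiv.mul_toMatrix_toPEquiv, PEquiv.toMatrix_toPEquiv_mul]
  constructor
  · intro h
    ext i j
    simpa using (congr_fun₂ h i (τ j)).symm
  · intro h
    ext i j
    nth_rw 1 [← h]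
    simp

end PermMatrix

variable [Fintype α] [Fintype β]

theorem sum_mul_submatrix_of_submatrix_eq [AddCommMonoid 𝕜] [Mul 𝕜] {D : Matrix α β 𝕜}
    {σ : Perm α} {τ : Perm β} (hD : D.submatrix σ τ = D) (R : Matrix α β 𝕜) :
    ∑ i, ∑ j, D i j * R (σ i) (τ j) = ∑ i, ∑ j, D i j * R i j := by
  nth_rw 1 [← hD]
  simp only [submatrix_apply]
  rw [← Equiv.sum_comp σ (fun i => ∑ j, D i j * R i j)]
  exact Finset.sum_congr rfl fun i _ => Equiv.sum_comp τ (fun j => D (σ i) j * R (σ i) j)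

theorem sum_sq_sub_le_of_sum_mul_eq_zero [CommRing 𝕜] [LinearOrder 𝕜]
    [IsStrictOrderedRing 𝕜] {Z Y R : Matrix α β 𝕜}
    (h : ∑ i, ∑ j, (Z - Y) i j * (Y - R) i j = 0) :
    ∑ i, ∑ j, (Y - R) i j ^ 2 ≤ ∑ i, ∑ j, (Z - R) i j ^ 2 :=
  calc ∑ i, ∑ j, (Y - R) i j ^ 2
      ≤ ∑ i, ∑ j, (Y - R) i j ^ 2 + 2 * ∑ i, ∑ j, (Z - Y) i j * (Y - R) i j
          + ∑ i, ∑ j, (Z - Y) i j ^ 2 := by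
        rw [h, mul_zero, add_zero]
        exact le_add_of_nonneg_right (by positivity)
    _ = ∑ i, ∑ j, (Z - R) i j ^ 2 := by
        simp only [Finset.mul_sum, ← Finset.sum_add_distrib]
        refine Finset.sum_congr rfl fun i _ => Finset.sum_congr rfl fun j _ => ?_
        simp only [sub_apply]
        ring

end Matrix

section BlockSymmetries

variable {n p m : ℕ}

def blockShift [NeZero n] (t : Fin n) : Perm (Fin n × Fin p) :=
  (Equiv.addRight t).prodCongr (Equiv.refl _)

def prodRev : Perm (Fin n × Fin p) :=
  Fin.revPerm.prodCongr Fin.revPerm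

@[simp]
theorem blockShift_apply [NeZero n] (t : Fin n) (x : Fin n × Fin p) :
    blockShift t x = (x.1 + t, x.2) :=
  rfl

@[simp]
theorem blockShift_symm [NeZero n] (t : Fin n) :
    (blockShift t).symm = (blockShift (-t) : Perm (Fin n × Fin p)) := by
  ext x <;> simp [blockShift]

@[simp]
theorem prodRev_apply (x : Fin n × Fin p) : prodRev x = (x.1.rev, x.2.rev) :=
  rfl

@[simp]
theorem prodRev_symm : (prodRev : Perm (Fin n × Fin p)).symm = prodRev :=
  rfl

theorem cyclicShift_eq_permMatrix [NeZero n] :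
    cyclicShift n = (Equiv.addRight (1 : Fin n)).permMatrix ℝ := by
  ext i j
  simp [cyclicShift, Fin.ext_iff, Fin.val_add, eq_comm]

open scoped Fin.NatCast in
theorem cyclicShift_pow_val_eq_permMatrix [NeZero n] (k : Fin n) :
    cyclicShift n ^ (k : ℕ) = (Equiv.addRight k).permMatrix ℝ := by
  rw [cyclicShift_eq_permMatrix, ← permMatrix_pow, nsmul_addRight, nsmul_one,
    Fin.cast_val_eq_self]

theorem exchMatrix_eq_permMatrix : exchMatrix n = (Fin.revPerm : Perm (Fin n)).permMatrix ℝ := by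
  ext i j
  simp only [exchMatrix, PEquiv.toMatrix_apply, of_apply, toPEquiv_apply, Option.mem_def,
    Option.some_inj, Fin.revPerm_apply, Fin.ext_iff, Fin.val_rev]
  exact if_congr (by omega) rfl rfl

theorem cyclicShift_pow_kronecker_one [NeZero n] (k : Fin n) :
    (cyclicShift n ^ (k : ℕ)) ⊗ₖ (1 : Matrix (Fin p) (Fin p) ℝ) =
      (blockShift k).permMatrix ℝ := by
  rw [blockShift, permMatrix_prodCongr, cyclicShift_pow_val_eq_permMatrix, ← permMatrix_refl]

theorem exchMatrix_kronecker_exchMatrix :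
    exchMatrix n ⊗ₖ exchMatrix p = (prodRev : Perm (Fin n × Fin p)).permMatrix ℝ := by
  rw [prodRev, permMatrix_prodCongr, exchMatrix_eq_permMatrix, exchMatrix_eq_permMatrix]

theorem sum_cyclicShift_pow_kronecker_apply [NeZero n] (b : Fin n → Matrix (Fin p) (Fin m) ℝ)
    (x : Fin n × Fin p) (y : Fin n × Fin m) :
    (∑ k : Fin n, (cyclicShift n ^ (k : ℕ)) ⊗ₖ b k) x y = b (y.1 - x.1) x.2 y.2 := by
  simp [Matrix.sum_apply, cyclicShift_pow_val_eq_permMatrix, ← eq_sub_iff_add_eq']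

theorem isBlockCirculant_iff [NeZero n] (B : Matrix (Fin n × Fin p) (Fin n × Fin m) ℝ) :
    IsBlockCirculant B ↔ ∀ t : Fin n, B.submatrix (blockShift t) (blockShift t) = B := by
  constructor
  · rintro ⟨b, rfl⟩ t
    ext x y
    simp [sum_cyclicShift_pow_kronecker_apply]
  · intro h
    refine ⟨fun k => of fun a c => B (0, a) (k, c), ?_⟩
    ext x y
    simpa [sum_cyclicShift_pow_kronecker_apply] using
      congr_fun₂ (h x.1) (0, x.2) (y.1 - x.1, y.2)

theorem mul_exchMatrix_kronecker_eq_iff (B : Matrix (Fin n × Fin p) (Fin n × Fin m) ℝ) :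
    B * (exchMatrix n ⊗ₖ exchMatrix m) = (exchMatrix n ⊗ₖ exchMatrix p) * B ↔
      B.submatrix prodRev prodRev = B := by
  rw [exchMatrix_kronecker_exchMatrix, exchMatrix_kronecker_exchMatrix,
    mul_permMatrix_eq_permMatrix_mul_iff]

end BlockSymmetries

section Average

variable {n l m : ℕ} [NeZero n]

noncomputable def centroCirculantAverage (R : Matrix (Fin n × Fin l) (Fin n × Fin m) ℝ) :
    Matrix (Fin n × Fin l) (Fin n × Fin m) ℝ :=
  (2 * (n : ℝ))⁻¹ • ∑ k : Fin n,
    (R + R.submatrix prodRev prodRev).submatrix (blockShift k) (blockShift k)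

theorem smul_sum_kronecker_conj_eq_centroCirculantAverage
    (R : Matrix (Fin n × Fin l) (Fin n × Fin m) ℝ) :
    (2 * (n : ℝ))⁻¹ • ∑ k : Fin n,
      ((cyclicShift n ^ (k : ℕ)) ⊗ₖ (1 : Matrix (Fin l) (Fin l) ℝ))ᵀ *
        (R + (exchMatrix n ⊗ₖ exchMatrix l) * R * (exchMatrix n ⊗ₖ exchMatrix m)) *
        ((cyclicShift n ^ (k : ℕ)) ⊗ₖ (1 : Matrix (Fin m) (Fin m) ℝ)) =
      centroCirculantAverage R := by
  simp only [cyclicShift_pow_kronecker_one, exchMatrix_kronecker_exchMatrix, transpose_permMatrix,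
    permMatrix_mul_mul, Perm.inv_def, blockShift_symm, prodRev_symm]
  exact congrArg _ (Fintype.sum_equiv (Equiv.neg _) _ _ fun k => by simp)

theorem centroCirculantAverage_submatrix_blockShift
    (R : Matrix (Fin n × Fin l) (Fin n × Fin m) ℝ) (t : Fin n) :
    (centroCirculantAverage R).submatrix (blockShift t) (blockShift t) =
      centroCirculantAverage R := by
  ext x y
  simp only [centroCirculantAverage, submatrix_apply, Matrix.smul_apply, Matrix.sum_apply]
  exact congrArg _ (Fintype.sum_equiv (Equiv.addLeft t) _ _ fun k => by simp [add_assoc])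

theorem centroCirculantAverage_submatrix_prodRev (R : Matrix (Fin n × Fin l) (Fin n × Fin m) ℝ) :
    (centroCirculantAverage R).submatrix prodRev prodRev = centroCirculantAverage R := by
  ext x y
  simp only [centroCirculantAverage, submatrix_apply, Matrix.smul_apply, Matrix.sum_apply]
  refine congrArg _ (Fintype.sum_equiv (Equiv.neg _) _ _ fun k => ?_)
  simp only [Matrix.add_apply, submatrix_apply, blockShift_apply, prodRev_apply, ← Fin.rev_sub,
    Fin.rev_rev, Equiv.neg_apply, sub_eq_add_neg]
  exact add_comm _ _

theorem sum_mul_sub_centroCirculantAverage_eq_zero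
    (R D : Matrix (Fin n × Fin l) (Fin n × Fin m) ℝ)
    (hshift : ∀ t, D.submatrix (blockShift t) (blockShift t) = D)
    (hrev : D.submatrix prodRev prodRev = D) :
    ∑ i, ∑ j, D i j * (centroCirculantAverage R - R) i j = 0 := by
  have hterm (k : Fin n) : ∑ i, ∑ j, D i j *
      (R + R.submatrix prodRev prodRev).submatrix (blockShift k) (blockShift k) i j =
      2 * ∑ i, ∑ j, D i j * R i j := by
    have hrev_shift :
        D.submatrix ((blockShift k).trans prodRev) ((blockShift k).trans prodRev) = D := by
      change (D.submatrix prodRev prodRev).submatrix (blockShift k) (blockShift k) = D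
      rw [hrev, hshift]
    simp only [submatrix_apply, Matrix.add_apply, mul_add, Finset.sum_add_distrib,
      ← Equiv.trans_apply]
    rw [sum_mul_submatrix_of_submatrix_eq (hshift k),
      sum_mul_submatrix_of_submatrix_eq hrev_shift R]
    ring
  calc ∑ i, ∑ j, D i j * (centroCirculantAverage R - R) i j
      = (2 * (n : ℝ))⁻¹ * ∑ k : Fin n, ∑ i, ∑ j, D i j *
          (R + R.submatrix prodRev prodRev).submatrix (blockShift k) (blockShift k) i j
        - ∑ i, ∑ j, D i j * R i j := by
        simp only [centroCirculantAverage, Matrix.sub_apply, Matrix.smul_apply, Matrix.sum_apply,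
          smul_eq_mul, mul_sub, Finset.sum_sub_distrib, Finset.mul_sum, mul_left_comm (D _ _)]
        congr 1
        conv_rhs => rw [Finset.sum_comm]
        exact Finset.sum_congr rfl fun i _ => Finset.sum_comm
    _ = 0 := by
        have : (n : ℝ) ≠ 0 := Nat.cast_ne_zero.2 (NeZero.ne n)
        simp only [hterm, Finset.sum_const, Finset.card_univ, Fintype.card_fin, nsmul_eq_mul]
        field_simp
        ring

end Average

theorem blockCirculant_centrosymmetric_approximation_general
    (n l m : ℕ) (hn : 1 < n)
    (R : Matrix (Fin n × Fin l) (Fin n × Fin m) ℝ)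
    (Zstar : Matrix (Fin n × Fin l) (Fin n × Fin m) ℝ)
    (hZstar : Zstar = (2 * (n : ℝ))⁻¹ • ∑ k : Fin n,
      ((cyclicShift n ^ (k : ℕ)) ⊗ₖ (1 : Matrix (Fin l) (Fin l) ℝ))ᵀ *
        (R + (exchMatrix n ⊗ₖ exchMatrix l) * R * (exchMatrix n ⊗ₖ exchMatrix m)) *
        ((cyclicShift n ^ (k : ℕ)) ⊗ₖ (1 : Matrix (Fin m) (Fin m) ℝ))) :
    IsBlockCirculant Zstar ∧
    Zstar * (exchMatrix n ⊗ₖ exchMatrix m) = (exchMatrix n ⊗ₖ exchMatrix l) * Zstar ∧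
    ∀ Z : Matrix (Fin n × Fin l) (Fin n × Fin m) ℝ,
      IsBlockCirculant Z →
      Z * (exchMatrix n ⊗ₖ exchMatrix m) = (exchMatrix n ⊗ₖ exchMatrix l) * Z →
      Real.sqrt (∑ i, ∑ j, (Zstar - R) i j ^ 2) ≤ Real.sqrt (∑ i, ∑ j, (Z - R) i j ^ 2) := by
  have : NeZero n := ⟨by omega⟩
  rw [smul_sum_kronecker_conj_eq_centroCirculantAverage] at hZstar
  subst hZstar
  refine ⟨(isBlockCirculant_iff _).2 (centroCirculantAverage_submatrix_blockShift R),
    (mul_exchMatrix_kronecker_eq_iff _).2 (centroCirculantAverage_submatrix_prodRev R),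
    fun Z hcirc hcentro => Real.sqrt_le_sqrt (sum_sq_sub_le_of_sum_mul_eq_zero ?_)⟩
  rw [isBlockCirculant_iff] at hcirc
  rw [mul_exchMatrix_kronecker_eq_iff] at hcentro
  exact sum_mul_sub_centroCirculantAverage_eq_zero R _
    (fun t => congrArg₂ (· - ·) (hcirc t) (centroCirculantAverage_submatrix_blockShift R t))
    (congrArg₂ (· - ·) hcentro (centroCirculantAverage_submatrix_prodRev R))

/-- **Optimal block-circulant and centrosymmetric approximation.** For an arbitrary matrix
`R`, the matrix `Z* = (1/(2n))·Σ_k (Ω_n^k ⊗ I_l)ᵀ·(R + J_{nl}·R·J_{nm})·(Ω_n^k ⊗ I_m)`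
(with `J_{nl} = J_n ⊗ J_l`) is simultaneously block-circulant and centrosymmetric, and it
minimizes the Frobenius-norm distance to `R` over all matrices with both properties. -/
theorem blockCirculant_centrosymmetric_approximation
    (n l m : ℕ) (hn : 1 < n) (hl : 1 < l) (hm : 1 < m)
    (hneven : Even n) (hleven : Even l) (hmeven : Even m)
    (R : Matrix (Fin n × Fin l) (Fin n × Fin m) ℝ)
    (Zstar : Matrix (Fin n × Fin l) (Fin n × Fin m) ℝ)
    (hZstar : Zstar = (2 * (n : ℝ))⁻¹ • ∑ k : Fin n,
      ((cyclicShift n ^ (k : ℕ)) ⊗ₖ (1 : Matrix (Fin l) (Fin l) ℝ))ᵀ *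
        (R + (exchMatrix n ⊗ₖ exchMatrix l) * R * (exchMatrix n ⊗ₖ exchMatrix m)) *
        ((cyclicShift n ^ (k : ℕ)) ⊗ₖ (1 : Matrix (Fin m) (Fin m) ℝ))) :
    IsBlockCirculant Zstar ∧
    Zstar * (exchMatrix n ⊗ₖ exchMatrix m) = (exchMatrix n ⊗ₖ exchMatrix l) * Zstar ∧
    ∀ Z : Matrix (Fin n × Fin l) (Fin n × Fin m) ℝ,
      IsBlockCirculant Z →
      Z * (exchMatrix n ⊗ₖ exchMatrix m) = (exchMatrix n ⊗ₖ exchMatrix l) * Z →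
      Real.sqrt (∑ i, ∑ j, (Zstar - R) i j ^ 2) ≤ Real.sqrt (∑ i, ∑ j, (Z - R) i j ^ 2) :=
  blockCirculant_centrosymmetric_approximation_general n l m hn R Zstar hZstar
end

section
/- Let S be an even positive integer and N_B, N_C even positive integers. Suppose R ∈ ℝ^{(S·N_B)×(S·N_C)} is real, block-circulant of order S with blocks r_k ∈ ℝ^{N_B×N_C} (R = Σ_{k=0}^{S−1} Ω_S^k ⊗ r_k), and centrosymmetric (R·J_{S·N_C} = J_{S·N_B}·R). For n = 0, …, S−1 define the Fourier blocks ν_n = Σ_{k=0}^{S−1} r_k · e^{−2πi·nk/S} ∈ ℂ^{N_B×N_C}. Then for every n: Re(ν_n) = r_0 + (−1)^n·r_{S/2} + Σ_{k=1}^{S/2−1} cos(2πnk/S)·(r_k + J_{N_B}·r_k·J_{N_C}) is centrosymmetric (Re(ν_n)·J_{N_C} = J_{N_B}·Re(ν_n)), and Im(ν_n) = Σ_{k=1}^{S/2−1} sin(2πnk/S)·(J_{N_B}·r_k·J_{N_C} − r_k) is skew-centrosymmetric (Im(ν_n)·J_{N_C} = −J_{N_B}·Im(ν_n)). -/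
open Matrix Kronecker Finset Fin.NatCast

/-! Reading the block-circulant matrix entrywise, `R (i, a) (j, b) = r (j - i) a b`, its
centrosymmetry says exactly `r (-k) = J * r k * J`. In the Fourier sum over `k ∈ ℤ/S`, the
index `k` pairs with `-k = S - k`; for `θₖ = 2πnk/S` the twiddle factors are `exp (∓iθₖ)`,
so the pair contributes `cos θₖ • (r k + J r k J)` to the real part and
`sin θₖ • (J r k J - r k)` to the imaginary part, while the self-paired indices `0` and `S / 2`
contribute `r 0` and `(-1) ^ n • r (S / 2)`, both fixed by `X ↦ J X J`. As `X ↦ J X J` is an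
involution, the matrices it fixes commute with `J` and those it negates anticommute with `J`. -/

open Real

theorem exchMatrix_eq_toMatrix (n : ℕ) :
    exchMatrix n = (Fin.revPerm : Equiv.Perm (Fin n)).toPEquiv.toMatrix := by
  ext i j
  rw [PEquiv.toMatrix_toPEquiv_eq, submatrix_apply, one_apply, exchMatrix, of_apply]
  simp only [Fin.revPerm_apply, Fin.ext_iff, Fin.val_rev, id]
  congr 1
  simp only [eq_iff_iff]
  omega

theorem exchMatrix_mul {n : Type*} {p : ℕ} (M : Matrix (Fin p) n ℝ) :
    exchMatrix p * M = M.submatrix Fin.rev id := by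
  rw [exchMatrix_eq_toMatrix, PEquiv.toMatrix_toPEquiv_mul]; rfl

theorem mul_exchMatrix {m : Type*} {q : ℕ} (M : Matrix m (Fin q) ℝ) :
    M * exchMatrix q = M.submatrix id Fin.rev := by
  rw [exchMatrix_eq_toMatrix, PEquiv.mul_toMatrix_toPEquiv]; rfl

theorem exchMatrix_mul_self (n : ℕ) : exchMatrix n * exchMatrix n = 1 := by
  rw [exchMatrix_mul, exchMatrix_eq_toMatrix, PEquiv.toMatrix_toPEquiv_eq, submatrix_submatrix]
  ext i j
  simp [one_apply]

theorem exchMatrix_mul_mul_exchMatrix {p q : ℕ} (X : Matrix (Fin p) (Fin q) ℝ) :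
    exchMatrix p * X * exchMatrix q = X.submatrix Fin.rev Fin.rev := by
  rw [exchMatrix_mul, mul_exchMatrix]; rfl

theorem exchMatrix_kronecker_exchMatrix_s16 (p q : ℕ) :
    exchMatrix p ⊗ₖ exchMatrix q =
      (Fin.revPerm.prodCongr Fin.revPerm : Equiv.Perm (Fin p × Fin q)).toPEquiv.toMatrix := by
  simp only [exchMatrix_eq_toMatrix, PEquiv.toMatrix_toPEquiv_eq, kroneckerMap_submatrix_submatrix]
  rw [one_kronecker_one]; rfl

theorem mul_exchMatrix_eq_of_conj_eq {p q : ℕ} {X Y : Matrix (Fin p) (Fin q) ℝ}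
    (h : exchMatrix p * X * exchMatrix q = Y) : X * exchMatrix q = exchMatrix p * Y := by
  rw [← h, ← Matrix.mul_assoc, ← Matrix.mul_assoc, exchMatrix_mul_self, Matrix.one_mul]

theorem add_conj_exchMatrix_mul_exchMatrix {p q : ℕ} (X : Matrix (Fin p) (Fin q) ℝ) :
    (X + exchMatrix p * X * exchMatrix q) * exchMatrix q =
      exchMatrix p * (X + exchMatrix p * X * exchMatrix q) := by
  apply mul_exchMatrix_eq_of_conj_eq
  ext a b
  simp [exchMatrix_mul_mul_exchMatrix, add_comm]

theorem conj_exchMatrix_sub_mul_exchMatrix {p q : ℕ} (X : Matrix (Fin p) (Fin q) ℝ) :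
    (exchMatrix p * X * exchMatrix q - X) * exchMatrix q =
      -(exchMatrix p * (exchMatrix p * X * exchMatrix q - X)) := by
  rw [← Matrix.mul_neg]
  apply mul_exchMatrix_eq_of_conj_eq
  ext a b
  simp [exchMatrix_mul_mul_exchMatrix]

theorem sum_smul_add_conj_exchMatrix_mul_exchMatrix {ι : Type*} {p q : ℕ} (s : Finset ι)
    (c : ι → ℝ) (X : ι → Matrix (Fin p) (Fin q) ℝ) :
    (∑ k ∈ s, c k • (X k + exchMatrix p * X k * exchMatrix q)) * exchMatrix q =
      exchMatrix p * ∑ k ∈ s, c k • (X k + exchMatrix p * X k * exchMatrix q) := by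
  simp only [Matrix.sum_mul, Matrix.mul_sum, Matrix.smul_mul, Matrix.mul_smul,
    add_conj_exchMatrix_mul_exchMatrix]

theorem sum_smul_conj_exchMatrix_sub_mul_exchMatrix {ι : Type*} {p q : ℕ} (s : Finset ι)
    (c : ι → ℝ) (X : ι → Matrix (Fin p) (Fin q) ℝ) :
    (∑ k ∈ s, c k • (exchMatrix p * X k * exchMatrix q - X k)) * exchMatrix q =
      -(exchMatrix p * ∑ k ∈ s, c k • (exchMatrix p * X k * exchMatrix q - X k)) := by
  simp only [Matrix.sum_mul, Matrix.mul_sum, Matrix.smul_mul, Matrix.mul_smul,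
    conj_exchMatrix_sub_mul_exchMatrix, smul_neg, sum_neg_distrib]

theorem cyclicShift_eq_toMatrix (S : ℕ) [NeZero S] :
    cyclicShift S = (Equiv.addRight (1 : Fin S)).toPEquiv.toMatrix := by
  ext i j
  rw [PEquiv.toMatrix_toPEquiv_eq, submatrix_apply, one_apply, cyclicShift, of_apply]
  simp only [Equiv.coe_addRight, Fin.ext_iff, Fin.val_add, Fin.val_one', id]
  congr 1
  simp only [eq_iff_iff, Nat.add_mod_mod]
  exact eq_comm

open Fin.CommRing in
theorem cyclicShift_pow (S : ℕ) [NeZero S] (k : ℕ) :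
    cyclicShift S ^ k = (Equiv.addRight (k : Fin S)).toPEquiv.toMatrix := by
  induction k with
  | zero => simp
  | succ k ih =>
    rw [pow_succ', ih, cyclicShift_eq_toMatrix, PEquiv.toMatrix_toPEquiv_mul,
      PEquiv.toMatrix_toPEquiv_eq, PEquiv.toMatrix_toPEquiv_eq, submatrix_submatrix]
    congr 1
    ext i
    simp [add_assoc, add_comm (1 : Fin S)]

theorem blockCirculant_apply_s16 {S : ℕ} [NeZero S] {m n : Type*} (r : Fin S → Matrix m n ℝ)
    (i j : Fin S) (a : m) (b : n) :
    (∑ k : Fin S, (cyclicShift S ^ (k : ℕ)) ⊗ₖ r k) (i, a) (j, b) = r (j - i) a b := by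
  simp only [Matrix.sum_apply, kroneckerMap_apply, cyclicShift_pow, PEquiv.toMatrix_toPEquiv_eq,
    submatrix_apply, one_apply, Fin.cast_val_eq_self, Equiv.coe_addRight, id,
    ← eq_sub_iff_add_eq', ite_mul, one_mul, zero_mul, sum_ite_eq', mem_univ, if_true]

theorem blockCirculant_neg_eq_of_centrosymm {S p q : ℕ} [NeZero S]
    (r : Fin S → Matrix (Fin p) (Fin q) ℝ)
    (hcs : (∑ k : Fin S, (cyclicShift S ^ (k : ℕ)) ⊗ₖ r k) *
        (exchMatrix S ⊗ₖ exchMatrix q) =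
      (exchMatrix S ⊗ₖ exchMatrix p) * ∑ k : Fin S, (cyclicShift S ^ (k : ℕ)) ⊗ₖ r k)
    (k : Fin S) : r (-k) = exchMatrix p * r k * exchMatrix q := by
  ext a b
  have h := congr_fun₂ hcs (Fin.rev k, Fin.rev a) (0, b)
  simp only [exchMatrix_kronecker_exchMatrix_s16, PEquiv.mul_toMatrix_toPEquiv,
    PEquiv.toMatrix_toPEquiv_mul, submatrix_apply, id, Equiv.prodCongr_symm,
    Equiv.prodCongr_apply, Prod.map, Fin.revPerm_symm, Fin.revPerm_apply, Fin.rev_rev,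
    blockCirculant_apply_s16] at h
  rw [show Fin.rev 0 - Fin.rev k = k by rw [← Fin.rev_add, zero_add, Fin.rev_rev], zero_sub] at h
  rw [mul_exchMatrix, exchMatrix_mul, submatrix_apply, submatrix_apply, id, id, h]

open Fin.CommRing in
theorem Fin.natCast_sub_eq_neg {S k : ℕ} [NeZero S] (hk : k ≤ S) :
    ((S - k : ℕ) : Fin S) = -(k : Fin S) := by
  rw [Nat.cast_sub hk, Fin.natCast_self, zero_sub]

theorem Finset.sum_range_two_mul_eq {M : Type*} [AddCommMonoid M] {m : ℕ} (hm : 0 < m)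
    (f : ℕ → M) :
    ∑ k ∈ range (2 * m), f k = f 0 + f m + ∑ k ∈ Ioo 0 m, (f k + f (2 * m - k)) := by
  have hupper : ∑ k ∈ Ico (m + 1) (2 * m), f k = ∑ k ∈ Ioo 0 m, f (2 * m - k) := by
    rw [Ico_add_one_left_eq_Ioo]
    refine sum_nbij' (2 * m - ·) (2 * m - ·) ?_ ?_ ?_ ?_ ?_ <;>
        intro a ha <;> simp only [mem_Ioo] at * <;> try omega
    congr 1
    omega
  rw [sum_add_distrib, range_eq_Ico, ← sum_Ico_consecutive f (Nat.zero_le m) (by omega),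
    sum_eq_sum_Ico_succ_bot hm, sum_eq_sum_Ico_succ_bot (by omega : m < 2 * m),
    Ico_add_one_left_eq_Ioo, hupper]
  abel

theorem Fin.sum_univ_eq_add_add_sum_Ioo_of_even {M : Type*} [AddCommMonoid M] {S : ℕ}
    (hS : Even S) (hS0 : S ≠ 0) (f : ℕ → M) :
    ∑ k : Fin S, f k = f 0 + f (S / 2) + ∑ k ∈ Ioo 0 (S / 2), (f k + f (S - k)) := by
  obtain ⟨m, rfl⟩ := hS
  rw [Fin.sum_univ_eq_sum_range, ← two_mul, Finset.sum_range_two_mul_eq (by omega),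
    Nat.mul_div_cancel_left _ two_pos]

theorem map_re_sum_smul_map_ofReal {ι m n : Type*} (s : Finset ι) (c : ι → ℂ)
    (r : ι → Matrix m n ℝ) :
    (∑ k ∈ s, c k • (r k).map (Complex.ofReal ·)).map Complex.re =
      ∑ k ∈ s, (c k).re • r k := by
  ext a b
  simp [Matrix.sum_apply, Complex.re_sum]

theorem map_im_sum_smul_map_ofReal {ι m n : Type*} (s : Finset ι) (c : ι → ℂ)
    (r : ι → Matrix m n ℝ) :
    (∑ k ∈ s, c k • (r k).map (Complex.ofReal ·)).map Complex.im =
      ∑ k ∈ s, (c k).im • r k := by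
  ext a b
  simp [Matrix.sum_apply, Complex.im_sum]

theorem exp_neg_two_pi_I_mul_div (n k S : ℕ) :
    Complex.exp (-(2 * π * Complex.I * n * k) / S) =
      Complex.exp (((-(2 * π * n * k / S) : ℝ) : ℂ) * Complex.I) := by
  push_cast
  ring_nf

theorem re_exp_neg_two_pi_I_mul_div (n k S : ℕ) :
    (Complex.exp (-(2 * π * Complex.I * n * k) / S)).re = cos (2 * π * n * k / S) := by
  rw [exp_neg_two_pi_I_mul_div, Complex.exp_ofReal_mul_I_re, cos_neg]

theorem im_exp_neg_two_pi_I_mul_div (n k S : ℕ) :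
    (Complex.exp (-(2 * π * Complex.I * n * k) / S)).im = -sin (2 * π * n * k / S) := by
  rw [exp_neg_two_pi_I_mul_div, Complex.exp_ofReal_mul_I_im, sin_neg]

theorem two_pi_mul_sub_div {S k : ℕ} (n : ℕ) (hk : k ≤ S) (hS : S ≠ 0) :
    2 * π * n * ((S - k : ℕ) : ℝ) / S = n * (2 * π) - 2 * π * n * k / S := by
  rw [Nat.cast_sub hk]
  field_simp

theorem two_pi_mul_half_div {S : ℕ} (n : ℕ) (hS : Even S) (hS0 : S ≠ 0) :
    2 * π * n * ((S / 2 : ℕ) : ℝ) / S = n * π := by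
  obtain ⟨m, rfl⟩ := hS
  rw [← two_mul, Nat.mul_div_cancel_left _ two_pos]
  have : (m : ℝ) ≠ 0 := by norm_cast; omega
  push_cast
  field_simp

section FourierBlocks

variable {S p q : ℕ} [NeZero S] (hS : Even S) (r : Fin S → Matrix (Fin p) (Fin q) ℝ)
  (hr : ∀ k : Fin S, r (-k) = exchMatrix p * r k * exchMatrix q)
include hS hr

theorem map_re_sum_exp_smul_eq (n : ℕ) :
    (∑ k : Fin S, Complex.exp (-(2 * π * Complex.I * n * (k : ℕ)) / S) •
        (r k).map (Complex.ofReal ·)).map Complex.re =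
      r 0 + (-1 : ℝ) ^ n • r ((S / 2 : ℕ) : Fin S) +
        ∑ k ∈ Ioo 0 (S / 2), cos (2 * π * n * k / S) •
          (r (k : Fin S) + exchMatrix p * r (k : Fin S) * exchMatrix q) := by
  have hS0 : S ≠ 0 := NeZero.ne S
  rw [map_re_sum_smul_map_ofReal]
  simp_rw [re_exp_neg_two_pi_I_mul_div]
  rw [show ∑ k : Fin S, cos (2 * π * n * (k : ℕ) / S) • r k =
      ∑ k : Fin S, cos (2 * π * n * (k : ℕ) / S) • r ((k : ℕ) : Fin S) by
    simp only [Fin.cast_val_eq_self],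
    Fin.sum_univ_eq_add_add_sum_Ioo_of_even hS hS0 (fun j => cos (2 * π * n * j / S) • r j)]
  congr 1
  · rw [two_pi_mul_half_div n hS hS0, cos_nat_mul_pi]
    simp
  · refine sum_congr rfl fun k hk => ?_
    have hkS : k ≤ S := by simp only [mem_Ioo] at hk; omega
    rw [two_pi_mul_sub_div n hkS hS0, cos_nat_mul_two_pi_sub, Fin.natCast_sub_eq_neg hkS, hr,
      smul_add]

theorem map_im_sum_exp_smul_eq (n : ℕ) :
    (∑ k : Fin S, Complex.exp (-(2 * π * Complex.I * n * (k : ℕ)) / S) •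
        (r k).map (Complex.ofReal ·)).map Complex.im =
      ∑ k ∈ Ioo 0 (S / 2), sin (2 * π * n * k / S) •
        (exchMatrix p * r (k : Fin S) * exchMatrix q - r (k : Fin S)) := by
  have hS0 : S ≠ 0 := NeZero.ne S
  rw [map_im_sum_smul_map_ofReal]
  simp_rw [im_exp_neg_two_pi_I_mul_div]
  rw [show ∑ k : Fin S, -sin (2 * π * n * (k : ℕ) / S) • r k =
      ∑ k : Fin S, -sin (2 * π * n * (k : ℕ) / S) • r ((k : ℕ) : Fin S) by
    simp only [Fin.cast_val_eq_self],
    Fin.sum_univ_eq_add_add_sum_Ioo_of_even hS hS0 (fun j => -sin (2 * π * n * j / S) • r j)]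
  rw [two_pi_mul_half_div n hS hS0, sin_nat_mul_pi]
  simp only [CharP.cast_eq_zero, mul_zero, zero_div, sin_zero, neg_zero, zero_smul, add_zero,
    zero_add]
  refine sum_congr rfl fun k hk => ?_
  have hkS : k ≤ S := by simp only [mem_Ioo] at hk; omega
  rw [two_pi_mul_sub_div n hkS hS0, sin_nat_mul_two_pi_sub, Fin.natCast_sub_eq_neg hkS, hr,
    neg_neg, smul_sub, neg_smul, sub_eq_neg_add]

theorem cosExpansion_mul_exchMatrix (a : ℝ) (c : ℕ → ℝ) :
    (r 0 + a • r ((S / 2 : ℕ) : Fin S) +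
        ∑ k ∈ Ioo 0 (S / 2),
          c k • (r (k : Fin S) + exchMatrix p * r (k : Fin S) * exchMatrix q)) * exchMatrix q =
      exchMatrix p * (r 0 + a • r ((S / 2 : ℕ) : Fin S) +
        ∑ k ∈ Ioo 0 (S / 2),
          c k • (r (k : Fin S) + exchMatrix p * r (k : Fin S) * exchMatrix q)) := by
  have hS2 : S / 2 ≤ S := Nat.div_le_self S 2
  have hneg : -((S / 2 : ℕ) : Fin S) = ((S / 2 : ℕ) : Fin S) := by
    rw [← Fin.natCast_sub_eq_neg hS2]
    congr 1
    obtain ⟨m, rfl⟩ := hS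
    omega
  have h0 := mul_exchMatrix_eq_of_conj_eq (hr 0).symm
  have hhalf := mul_exchMatrix_eq_of_conj_eq (hr ((S / 2 : ℕ) : Fin S)).symm
  rw [neg_zero] at h0
  rw [hneg] at hhalf
  simp only [Matrix.add_mul, Matrix.mul_add, Matrix.smul_mul, Matrix.mul_smul, h0, hhalf,
    sum_smul_add_conj_exchMatrix_mul_exchMatrix]

end FourierBlocks

theorem fourier_blocks_centro_structure_general
    (S N_B N_C : ℕ) [NeZero S] (hSeven : Even S)
    (r : Fin S → Matrix (Fin N_B) (Fin N_C) ℝ)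
    (R : Matrix (Fin S × Fin N_B) (Fin S × Fin N_C) ℝ)
    (hR : R = ∑ k : Fin S, (cyclicShift S ^ (k : ℕ)) ⊗ₖ r k)
    (hcs : R * (exchMatrix S ⊗ₖ exchMatrix N_C) = (exchMatrix S ⊗ₖ exchMatrix N_B) * R)
    (ν : Fin S → Matrix (Fin N_B) (Fin N_C) ℂ)
    (hν : ∀ n : Fin S, ν n = ∑ k : Fin S,
      Complex.exp (-(2 * Real.pi * Complex.I * (n : ℕ) * (k : ℕ)) / S) •
        (r k).map (Complex.ofReal ·)) :
    ∀ n : Fin S,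
      ((ν n).map Complex.re =
        r 0 + ((-1 : ℝ)) ^ (n : ℕ) • r ((S / 2 : ℕ) : Fin S) +
          ∑ k ∈ Finset.Ioo 0 (S / 2), Real.cos (2 * Real.pi * (n : ℕ) * k / S) •
            (r ((k : ℕ) : Fin S) + exchMatrix N_B * r ((k : ℕ) : Fin S) * exchMatrix N_C)) ∧
      (ν n).map Complex.re * exchMatrix N_C = exchMatrix N_B * (ν n).map Complex.re ∧
      ((ν n).map Complex.im =
        ∑ k ∈ Finset.Ioo 0 (S / 2), Real.sin (2 * Real.pi * (n : ℕ) * k / S) •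
          (exchMatrix N_B * r ((k : ℕ) : Fin S) * exchMatrix N_C - r ((k : ℕ) : Fin S))) ∧
      (ν n).map Complex.im * exchMatrix N_C = -(exchMatrix N_B * (ν n).map Complex.im) := by
  subst hR
  have hr := blockCirculant_neg_eq_of_centrosymm r hcs
  intro n
  rw [hν n, map_re_sum_exp_smul_eq hSeven r hr, map_im_sum_exp_smul_eq hSeven r hr]
  exact ⟨rfl, cosExpansion_mul_exchMatrix hSeven r hr _ _, rfl,
    sum_smul_conj_exchMatrix_sub_mul_exchMatrix _ _ _⟩

/-- **Structure of the Fourier blocks of a block-circulant centrosymmetric matrix.**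
If `R = Σ_k Ω_S^k ⊗ r_k` is block-circulant and centrosymmetric, then each Fourier block
`ν_n = Σ_k r_k·e^{−2πi·nk/S}` has a centrosymmetric real part
`Re(ν_n) = r_0 + (−1)^n·r_{S/2} + Σ_{k=1}^{S/2−1} cos(2πnk/S)·(r_k + J·r_k·J)` and a
skew-centrosymmetric imaginary part
`Im(ν_n) = Σ_{k=1}^{S/2−1} sin(2πnk/S)·(J·r_k·J − r_k)`. -/
theorem fourier_blocks_centro_structure
    (S N_B N_C : ℕ) [NeZero S] (hSeven : Even S)
    (hNB : 0 < N_B) (hNC : 0 < N_C) (hNBeven : Even N_B) (hNCeven : Even N_C)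
    (r : Fin S → Matrix (Fin N_B) (Fin N_C) ℝ)
    (R : Matrix (Fin S × Fin N_B) (Fin S × Fin N_C) ℝ)
    (hR : R = ∑ k : Fin S, (cyclicShift S ^ (k : ℕ)) ⊗ₖ r k)
    (hcs : R * (exchMatrix S ⊗ₖ exchMatrix N_C) = (exchMatrix S ⊗ₖ exchMatrix N_B) * R)
    (ν : Fin S → Matrix (Fin N_B) (Fin N_C) ℂ)
    (hν : ∀ n : Fin S, ν n = ∑ k : Fin S,
      Complex.exp (-(2 * Real.pi * Complex.I * (n : ℕ) * (k : ℕ)) / S) •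
        (r k).map (Complex.ofReal ·)) :
    ∀ n : Fin S,
      ((ν n).map Complex.re =
        r 0 + ((-1 : ℝ)) ^ (n : ℕ) • r ((S / 2 : ℕ) : Fin S) +
          ∑ k ∈ Finset.Ioo 0 (S / 2), Real.cos (2 * Real.pi * (n : ℕ) * k / S) •
            (r ((k : ℕ) : Fin S) + exchMatrix N_B * r ((k : ℕ) : Fin S) * exchMatrix N_C)) ∧
      (ν n).map Complex.re * exchMatrix N_C = exchMatrix N_B * (ν n).map Complex.re ∧
      ((ν n).map Complex.im =
        ∑ k ∈ Finset.Ioo 0 (S / 2), Real.sin (2 * Real.pi * (n : ℕ) * k / S) •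
          (exchMatrix N_B * r ((k : ℕ) : Fin S) * exchMatrix N_C - r ((k : ℕ) : Fin S))) ∧
      (ν n).map Complex.im * exchMatrix N_C = -(exchMatrix N_B * (ν n).map Complex.im) :=
  fourier_blocks_centro_structure_general S N_B N_C hSeven r R hR hcs ν hν
end
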